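/- arXiv:2010.16250 — 5 statements merged into one kernel-verified Lean document; each statement's English description precedes it below -/
import Mathlib

section
/- Let f : {1,...,N}^d → ℝ satisfy discrete midpoint convexity, i.e., f(x) + f(y) ≥ f(⌈(x+y)/2⌉) + f(⌊(x+y)/2⌋) for all x, y in the domain, where the ceiling and floor are taken componentwise. If x ∈ {1,...,N}^d satisfies f(x) ≤ f(y) for every y ∈ {1,...,N}^d with ‖y − x‖_∞ ≤ 1, then f(x) ≤ f(y) for every y ∈ {1,...,N}^d. -/
/-! Induction on the `ℓ∞`-distance `k` from the local minimiser `x`: for `k ≥ 2` both rounded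
midpoints of `x` and `y` are at distance at most `⌈k / 2⌉ ≤ k - 1` from `x`, so by induction
`f x` bounds both `f ⌈(x + y) / 2⌉` and `f ⌊(x + y) / 2⌋`, and midpoint convexity gives
`2 f x ≤ f x + f y`. -/

namespace Int

theorem abs_add_add_one_ediv_two_sub_le {a b k : ℤ} (hk : 1 ≤ k) (h : |b - a| ≤ k + 1) :
    |(a + b + 1) / 2 - a| ≤ k := by
  rw [abs_le] at h ⊢
  omega

theorem abs_add_ediv_two_sub_le {a b k : ℤ} (hk : 1 ≤ k) (h : |b - a| ≤ k + 1) :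
    |(a + b) / 2 - a| ≤ k := by
  rw [abs_le] at h ⊢
  omega

end Int

section MidpointConvex

variable {ι : Type*} {S : Set (ι → ℤ)} {f : (ι → ℤ) → ℝ}

theorem le_of_isLocalMin_of_midpointConvex
    (hS : ∀ x ∈ S, ∀ y ∈ S,
      (fun i => (x i + y i + 1) / 2) ∈ S ∧ (fun i => (x i + y i) / 2) ∈ S)
    (hmid : ∀ x ∈ S, ∀ y ∈ S,
      f (fun i => (x i + y i + 1) / 2) + f (fun i => (x i + y i) / 2) ≤ f x + f y)
    {x : ι → ℤ} (hx : x ∈ S) (hloc : ∀ y ∈ S, (∀ i, |y i - x i| ≤ 1) → f x ≤ f y) :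
    ∀ k : ℕ, ∀ y ∈ S, (∀ i, |y i - x i| ≤ k) → f x ≤ f y
  | 0, y, hy, hdist => hloc y hy fun i => (hdist i).trans zero_le_one
  | 1, y, hy, hdist => hloc y hy fun i => mod_cast hdist i
  | k + 2, y, hy, hdist => by
    have ih := le_of_isLocalMin_of_midpointConvex hS hmid hx hloc (k + 1)
    have hk : (1 : ℤ) ≤ (k + 1 : ℕ) := by omega
    have hdist' : ∀ i, |y i - x i| ≤ (k + 1 : ℕ) + 1 := fun i => by exact_mod_cast hdist i
    have hceil := ih _ (hS x hx y hy).1 fun i => Int.abs_add_add_one_ediv_two_sub_le hk (hdist' i)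
    have hfloor := ih _ (hS x hx y hy).2 fun i => Int.abs_add_ediv_two_sub_le hk (hdist' i)
    linarith [hmid x hx y hy]

end MidpointConvex

theorem discrete_local_min_is_global_min_general
    (d N : ℕ)
    (f : (Fin d → ℤ) → ℝ)
    (hmid : ∀ x y : Fin d → ℤ,
      (∀ i, 1 ≤ x i ∧ x i ≤ (N : ℤ)) → (∀ i, 1 ≤ y i ∧ y i ≤ (N : ℤ)) →
      f (fun i => (x i + y i + 1) / 2) + f (fun i => (x i + y i) / 2) ≤ f x + f y)
    (x : Fin d → ℤ) (hx : ∀ i, 1 ≤ x i ∧ x i ≤ (N : ℤ))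
    (hloc : ∀ y : Fin d → ℤ, (∀ i, 1 ≤ y i ∧ y i ≤ (N : ℤ)) →
      (∀ i, |y i - x i| ≤ 1) → f x ≤ f y) :
    ∀ y : Fin d → ℤ, (∀ i, 1 ≤ y i ∧ y i ≤ (N : ℤ)) → f x ≤ f y := by
  set cube : Set (Fin d → ℤ) := {y | ∀ i, 1 ≤ y i ∧ y i ≤ (N : ℤ)}
  have hcube : ∀ x ∈ cube, ∀ y ∈ cube,
      (fun i => (x i + y i + 1) / 2) ∈ cube ∧ (fun i => (x i + y i) / 2) ∈ cube :=
    fun x hx y hy => ⟨fun i => by beta_reduce; have := hx i; have := hy i; omega,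
      fun i => by beta_reduce; have := hx i; have := hy i; omega⟩
  intro y hy
  refine le_of_isLocalMin_of_midpointConvex hcube (fun x hx y hy => hmid x y hx hy) hx hloc N y hy
    fun i => ?_
  have := hx i; have := hy i
  rw [abs_le]; omega

/-- For an L♮-convex (discretely midpoint convex) function on the lattice
cube `{1,...,N}^d`, local optimality in the `ℓ∞`-ball of radius 1 implies global optimality. -/
theorem discrete_local_min_is_global_min
    (d N : ℕ) (hd : 1 ≤ d) (hN : 2 ≤ N)
    (f : (Fin d → ℤ) → ℝ)
    (hmid : ∀ x y : Fin d → ℤ,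
      (∀ i, 1 ≤ x i ∧ x i ≤ (N : ℤ)) → (∀ i, 1 ≤ y i ∧ y i ≤ (N : ℤ)) →
      f (fun i => (x i + y i + 1) / 2) + f (fun i => (x i + y i) / 2) ≤ f x + f y)
    (x : Fin d → ℤ) (hx : ∀ i, 1 ≤ x i ∧ x i ≤ (N : ℤ))
    (hloc : ∀ y : Fin d → ℤ, (∀ i, 1 ≤ y i ∧ y i ≤ (N : ℤ)) →
      (∀ i, |y i - x i| ≤ 1) → f x ≤ f y) :
    ∀ y : Fin d → ℤ, (∀ i, 1 ≤ y i ∧ y i ≤ (N : ℤ)) → f x ≤ f y :=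
  discrete_local_min_is_global_min_general d N f hmid x hx hloc
end

section
/- Let f : {1,...,N}^d → ℤ (or ℝ) be L♮-convex, i.e., satisfy f(x)+f(y) ≥ f(⌈(x+y)/2⌉)+f(⌊(x+y)/2⌋) for all x,y. Then f satisfies translation submodularity: for all x, y in the domain and all natural numbers α such that (x − α·1) ∨ y and x ∧ (y + α·1) remain in the domain, one has f(x) + f(y) ≥ f((x − α·1) ∨ y) + f(x ∧ (y + α·1)). -/
/-!
Submodularity (`α = 0`) is proved by induction on `‖x - y‖∞`. With `u = ⌈(x + y) / 2⌉`, the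
inequalities at the pairs `(x, u)`, `(y, u)`, `(x ∨ u, y ∨ u)` and `(x ∧ u, y ∧ u)`, all at
about half the distance, add up to the inequality at `(x, y)`; when `‖x - y‖∞ ≤ 1` the join and
meet are the two midpoints. The case `α = 1` follows in the same way from the pairs
`(x, ⌊(x + y) / 2⌋)` and `(⌈(x + y) / 2⌉, y)`, two submodular merges and one midpoint inequality.
Finally, the cases `α`, `1` and `0` combine into the case `α + 1`.

Every auxiliary point lies coordinatewise between `x` and `y`, so the argument works on any
product of intervals of `ℤ`.
-/

open Set

def DiscreteMidpointConvexOn {ι : Type*} (S : Set (ι → ℤ)) (f : (ι → ℤ) → ℝ) : Prop :=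
  ∀ x y, x ∈ S → y ∈ S →
    f (fun i => (x i + y i + 1) / 2) + f (fun i => (x i + y i) / 2) ≤ f x + f y

def TranslationSubmodularAt {ι : Type*} (f : (ι → ℤ) → ℝ) (α : ℕ) (x y : ι → ℤ) : Prop :=
  f (fun i => max (x i - α) (y i)) + f (fun i => min (x i) (y i + α)) ≤ f x + f y

def TranslationSubmodularOn {ι : Type*} (S : Set (ι → ℤ)) (f : (ι → ℤ) → ℝ) (α : ℕ) : Prop :=
  ∀ x y, x ∈ S → y ∈ S → TranslationSubmodularAt f α x y

variable {ι : Type*} {s : ι → Set ℤ} {f : (ι → ℤ) → ℝ}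

theorem mem_univ_pi_of_between (hs : ∀ i, (s i).OrdConnected) {x y z : ι → ℤ}
    (hx : x ∈ univ.pi s) (hy : y ∈ univ.pi s)
    (hz : ∀ i, min (x i) (y i) ≤ z i ∧ z i ≤ max (x i) (y i)) : z ∈ univ.pi s :=
  fun i _ => (hs i).uIcc_subset (hx i trivial) (hy i trivial) (hz i)

theorem pi_int_induction_on_halving [Finite ι] {P : (ι → ℤ) → (ι → ℤ) → Prop}
    (base : ∀ x y, (∀ i, (x i - y i).natAbs ≤ 1) → P x y)
    (step : ∀ x y,
      (∀ z w, (∀ i, (z i - w i).natAbs ≤ ((x i - y i).natAbs + 1) / 2) → P z w) → P x y)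
    (x y : ι → ℤ) : P x y := by
  suffices h : ∀ n : ℕ, ∀ x y : ι → ℤ, (∀ i, (x i - y i).natAbs ≤ n) → P x y from
    have ⟨n, hn⟩ := Finite.exists_le fun i => (x i - y i).natAbs
    h n x y hn
  intro n
  induction n using Nat.strong_induction_on with
  | _ n ih =>
    intro x y hxy
    by_cases hn : n ≤ 1
    · exact base x y fun i => (hxy i).trans hn
    · refine step x y fun z w hzw => ih ((n + 1) / 2) (by omega) z w fun i => ?_
      exact (hzw i).trans (Nat.div_le_div_right (Nat.succ_le_succ (hxy i)))

theorem DiscreteMidpointConvexOn.add_le_of_eq {S : Set (ι → ℤ)}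
    (hf : DiscreteMidpointConvexOn S f) {x y p q : ι → ℤ} (hx : x ∈ S) (hy : y ∈ S)
    (hp : ∀ i, (x i + y i + 1) / 2 = p i) (hq : ∀ i, (x i + y i) / 2 = q i) :
    f p + f q ≤ f x + f y := by
  obtain rfl : (fun i => (x i + y i + 1) / 2) = p := funext hp
  obtain rfl : (fun i => (x i + y i) / 2) = q := funext hq
  exact hf x y hx hy

theorem translationSubmodularAt_iff {α : ℕ} {x y p q : ι → ℤ}
    (hp : ∀ i, max (x i - α) (y i) = p i) (hq : ∀ i, min (x i) (y i + α) = q i) :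
    TranslationSubmodularAt f α x y ↔ f p + f q ≤ f x + f y := by
  obtain rfl : (fun i => max (x i - α) (y i)) = p := funext hp
  obtain rfl : (fun i => min (x i) (y i + α)) = q := funext hq
  rfl

theorem translationSubmodularAt_zero_iff {x y : ι → ℤ} :
    TranslationSubmodularAt f 0 x y ↔
      f (fun i => max (x i) (y i)) + f (fun i => min (x i) (y i)) ≤ f x + f y :=
  translationSubmodularAt_iff (fun i => by omega) (fun i => by omega)

theorem TranslationSubmodularAt.add_le_of_eq {α : ℕ} {x y p q : ι → ℤ}
    (h : TranslationSubmodularAt f α x y)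
    (hp : ∀ i, max (x i - α) (y i) = p i) (hq : ∀ i, min (x i) (y i + α) = q i) :
    f p + f q ≤ f x + f y :=
  (translationSubmodularAt_iff hp hq).1 h

theorem TranslationSubmodularOn.succ {α : ℕ} (hα : TranslationSubmodularOn (univ.pi s) f α)
    (hs : ∀ i, (s i).OrdConnected) (h₀ : TranslationSubmodularOn (univ.pi s) f 0)
    (h₁ : TranslationSubmodularOn (univ.pi s) f 1) :
    TranslationSubmodularOn (univ.pi s) f (α + 1) := by
  intro x y hx hy
  let a : ι → ℤ := fun i => max (x i - 1) (y i)
  let b : ι → ℤ := fun i => max (min (x i - 1) (y i + α)) (min (x i) (y i))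
  let p : ι → ℤ := fun i => min (a i) (y i + α)
  let q : ι → ℤ := fun i => max (x i - 1) (b i)
  have ha : a ∈ univ.pi s := mem_univ_pi_of_between hs hx hy fun i => by simp only [a]; omega
  have hb : b ∈ univ.pi s := mem_univ_pi_of_between hs hx hy fun i => by simp only [b]; omega
  have hp : p ∈ univ.pi s := mem_univ_pi_of_between hs hx hy fun i => by simp only [p, a]; omega
  have hq : q ∈ univ.pi s := mem_univ_pi_of_between hs hx hy fun i => by simp only [q, b]; omega
  have hα' : f (fun i => max (x i - (α + 1 : ℕ)) (y i)) + f p ≤ f a + f y :=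
    (hα a y ha hy).add_le_of_eq (fun i => by simp only [a]; omega) (fun _ => rfl)
  have h₁' : f q + f (fun i => min (x i) (y i + (α + 1 : ℕ))) ≤ f x + f b :=
    (h₁ x b hx hb).add_le_of_eq (fun i => by simp only [q]; omega)
      (fun i => by simp only [b]; omega)
  have h₀' : f a + f b ≤ f q + f p :=
    (h₀ q p hq hp).add_le_of_eq (fun i => by simp only [q, p, a, b]; omega)
      (fun i => by simp only [q, p, a, b]; omega)
  exact (translationSubmodularAt_iff (fun _ => rfl) (fun _ => rfl)).2 (by linarith)

variable [Finite ι]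

theorem DiscreteMidpointConvexOn.translationSubmodularOn_zero (hs : ∀ i, (s i).OrdConnected)
    (hf : DiscreteMidpointConvexOn (univ.pi s) f) : TranslationSubmodularOn (univ.pi s) f 0 := by
  refine pi_int_induction_on_halving (fun x y hxy hx hy => ?_) (fun x y ih hx hy => ?_)
  · exact hf.add_le_of_eq hx hy (fun i => by have := hxy i; omega)
      (fun i => by have := hxy i; omega)
  let u : ι → ℤ := fun i => (x i + y i + 1) / 2
  let j₁ : ι → ℤ := fun i => max (x i) (u i)
  let j₂ : ι → ℤ := fun i => max (y i) (u i)
  let m₁ : ι → ℤ := fun i => min (x i) (u i)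
  let m₂ : ι → ℤ := fun i => min (y i) (u i)
  have hu : u ∈ univ.pi s := mem_univ_pi_of_between hs hx hy fun i => by simp only [u]; omega
  have hj₁ : j₁ ∈ univ.pi s :=
    mem_univ_pi_of_between hs hx hy fun i => by simp only [j₁, u]; omega
  have hj₂ : j₂ ∈ univ.pi s :=
    mem_univ_pi_of_between hs hx hy fun i => by simp only [j₂, u]; omega
  have hm₁ : m₁ ∈ univ.pi s :=
    mem_univ_pi_of_between hs hx hy fun i => by simp only [m₁, u]; omega
  have hm₂ : m₂ ∈ univ.pi s :=
    mem_univ_pi_of_between hs hx hy fun i => by simp only [m₂, u]; omega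
  have hxu : f j₁ + f m₁ ≤ f x + f u :=
    (ih x u (fun i => by simp only [u]; omega) hx hu).add_le_of_eq
      (fun i => by simp only [j₁]; omega) (fun i => by simp only [m₁]; omega)
  have hyu : f j₂ + f m₂ ≤ f y + f u :=
    (ih y u (fun i => by simp only [u]; omega) hy hu).add_le_of_eq
      (fun i => by simp only [j₂]; omega) (fun i => by simp only [m₂]; omega)
  have hjoin : f (fun i => max (x i) (y i)) + f u ≤ f j₁ + f j₂ :=
    (ih j₁ j₂ (fun i => by simp only [j₁, j₂, u]; omega) hj₁ hj₂).add_le_of_eq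
      (fun i => by simp only [j₁, j₂, u]; omega) (fun i => by simp only [j₁, j₂, u]; omega)
  have hmeet : f u + f (fun i => min (x i) (y i)) ≤ f m₁ + f m₂ :=
    (ih m₁ m₂ (fun i => by simp only [m₁, m₂, u]; omega) hm₁ hm₂).add_le_of_eq
      (fun i => by simp only [m₁, m₂, u]; omega) (fun i => by simp only [m₁, m₂, u]; omega)
  exact translationSubmodularAt_zero_iff.2 (by linarith)

theorem DiscreteMidpointConvexOn.translationSubmodularOn_one (hs : ∀ i, (s i).OrdConnected)
    (hf : DiscreteMidpointConvexOn (univ.pi s) f) : TranslationSubmodularOn (univ.pi s) f 1 := by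
  have hf₀ := hf.translationSubmodularOn_zero hs
  refine pi_int_induction_on_halving (fun x y hxy hx hy => ?_) (fun x y ih hx hy => ?_)
  · exact (translationSubmodularAt_iff (fun i => by have := hxy i; omega)
      (fun i => by have := hxy i; omega)).2 (add_comm (f y) (f x)).le
  let u : ι → ℤ := fun i => (x i + y i + 1) / 2
  let v : ι → ℤ := fun i => (x i + y i) / 2
  let p₁ : ι → ℤ := fun i => max (x i - 1) (v i)
  let q₁ : ι → ℤ := fun i => min (x i) (v i + 1)
  let p₂ : ι → ℤ := fun i => max (u i - 1) (y i)
  let q₂ : ι → ℤ := fun i => min (u i) (y i + 1)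
  let w₁ : ι → ℤ := fun i => min (p₁ i) (p₂ i)
  let w₂ : ι → ℤ := fun i => max (q₁ i) (q₂ i)
  have hu : u ∈ univ.pi s := mem_univ_pi_of_between hs hx hy fun i => by simp only [u]; omega
  have hv : v ∈ univ.pi s := mem_univ_pi_of_between hs hx hy fun i => by simp only [v]; omega
  have hp₁ : p₁ ∈ univ.pi s :=
    mem_univ_pi_of_between hs hx hy fun i => by simp only [p₁, v]; omega
  have hq₁ : q₁ ∈ univ.pi s :=
    mem_univ_pi_of_between hs hx hy fun i => by simp only [q₁, v]; omega
  have hp₂ : p₂ ∈ univ.pi s :=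
    mem_univ_pi_of_between hs hx hy fun i => by simp only [p₂, u]; omega
  have hq₂ : q₂ ∈ univ.pi s :=
    mem_univ_pi_of_between hs hx hy fun i => by simp only [q₂, u]; omega
  have hw₁ : w₁ ∈ univ.pi s :=
    mem_univ_pi_of_between hs hx hy fun i => by simp only [w₁, p₁, p₂, u, v]; omega
  have hw₂ : w₂ ∈ univ.pi s :=
    mem_univ_pi_of_between hs hx hy fun i => by simp only [w₂, q₁, q₂, u, v]; omega
  have hxv : f p₁ + f q₁ ≤ f x + f v :=
    (ih x v (fun i => by simp only [v]; omega) hx hv).add_le_of_eq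
      (fun i => by simp only [p₁]; omega) (fun i => by simp only [q₁]; omega)
  have huy : f p₂ + f q₂ ≤ f u + f y :=
    (ih u y (fun i => by simp only [u]; omega) hu hy).add_le_of_eq
      (fun i => by simp only [p₂]; omega) (fun i => by simp only [q₂]; omega)
  have hp : f (fun i => max (x i - (1 : ℕ)) (y i)) + f w₁ ≤ f p₁ + f p₂ :=
    (hf₀ p₁ p₂ hp₁ hp₂).add_le_of_eq (fun i => by simp only [p₁, p₂, u, v]; omega)
      (fun i => by simp only [w₁]; omega)
  have hq : f w₂ + f (fun i => min (x i) (y i + (1 : ℕ))) ≤ f q₁ + f q₂ :=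
    (hf₀ q₁ q₂ hq₁ hq₂).add_le_of_eq (fun i => by simp only [w₂]; omega)
      (fun i => by simp only [q₁, q₂, u, v]; omega)
  have hw : f u + f v ≤ f w₂ + f w₁ :=
    hf.add_le_of_eq hw₂ hw₁ (fun i => by simp only [w₁, w₂, p₁, p₂, q₁, q₂, u, v]; omega)
      (fun i => by simp only [w₁, w₂, p₁, p₂, q₁, q₂, u, v]; omega)
  exact (translationSubmodularAt_iff (fun _ => rfl) (fun _ => rfl)).2 (by linarith)

theorem DiscreteMidpointConvexOn.translationSubmodularOn (hs : ∀ i, (s i).OrdConnected)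
    (hf : DiscreteMidpointConvexOn (univ.pi s) f) (α : ℕ) :
    TranslationSubmodularOn (univ.pi s) f α := by
  induction α with
  | zero => exact hf.translationSubmodularOn_zero hs
  | succ α ih =>
    exact ih.succ hs (hf.translationSubmodularOn_zero hs) (hf.translationSubmodularOn_one hs)

/-- An L♮-convex function (discrete midpoint convexity) on `{1,...,N}^d`
satisfies translation submodularity. -/
theorem lnat_convex_translation_submodular
    (d N : ℕ) (f : (Fin d → ℤ) → ℝ)
    (hmid : ∀ x y : Fin d → ℤ,
      (∀ i, 1 ≤ x i ∧ x i ≤ (N : ℤ)) → (∀ i, 1 ≤ y i ∧ y i ≤ (N : ℤ)) →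
      f (fun i => (x i + y i + 1) / 2) + f (fun i => (x i + y i) / 2) ≤ f x + f y) :
    ∀ x y : Fin d → ℤ,
      (∀ i, 1 ≤ x i ∧ x i ≤ (N : ℤ)) → (∀ i, 1 ≤ y i ∧ y i ≤ (N : ℤ)) →
      ∀ α : ℕ,
        (∀ i, 1 ≤ max (x i - (α : ℤ)) (y i) ∧ max (x i - (α : ℤ)) (y i) ≤ (N : ℤ)) →
        (∀ i, 1 ≤ min (x i) (y i + (α : ℤ)) ∧ min (x i) (y i + (α : ℤ)) ≤ (N : ℤ)) →
        f (fun i => max (x i - (α : ℤ)) (y i)) + f (fun i => min (x i) (y i + (α : ℤ)))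
          ≤ f x + f y := by
  intro x y hx hy α _ _
  have hf : DiscreteMidpointConvexOn (univ.pi fun _ => Icc 1 (N : ℤ)) f :=
    fun x y hx hy => hmid x y (fun i => hx i trivial) (fun i => hy i trivial)
  exact hf.translationSubmodularOn (fun _ => ordConnected_Icc) α x y
    (fun i _ => hx i) (fun i _ => hy i)
end

section
/- Let f : {1,...,N}^d → ℝ satisfy translation submodularity: f(x) + f(y) ≥ f((x − α·1) ∨ y) + f(x ∧ (y + α·1)) whenever both resulting points lie in the domain. Fix x in the domain, a constant a ∈ [0,1), and a constant b ≥ 0. Suppose that for every point of the form x + e_S or x − e_S (with S ⊆ [d], where e_S := Σ_{i∈S} e_i) lying in the domain, we have f at that point minus f(x) ≥ −b/(1−a). Then for every y in the domain with ‖y − x‖_∞ ≤ 1 one has f(y) ≥ f(x) − 2b/(1−a). -/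
/-!
Translation submodularity with `α = 0` is ordinary submodularity on the box, and for `y` in the
unit `ℓ∞`-ball around `x` the points `x ⊔ y` and `x ⊓ y` are exactly `x + e_S₁` and `x - e_S₂`,
with `S₁ = {i | x i < y i}` and `S₂ = {i | y i < x i}`. Hence
`f y ≥ f (x + e_S₁) + f (x - e_S₂) - f x`, and each of the two increments loses at most `b/(1-a)`.
-/

open Finset

section Box

variable {ι : Type*}

def InBox (N : ℕ) (x : ι → ℤ) : Prop := ∀ i, 1 ≤ x i ∧ x i ≤ (N : ℤ)

def TranslationSubmodular (N : ℕ) (f : (ι → ℤ) → ℝ) : Prop :=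
  ∀ x y : ι → ℤ, InBox N x → InBox N y → ∀ α : ℕ,
    InBox N (fun i => max (x i - (α : ℤ)) (y i)) →
    InBox N (fun i => min (x i) (y i + (α : ℤ))) →
    f (fun i => max (x i - (α : ℤ)) (y i)) + f (fun i => min (x i) (y i + (α : ℤ)))
      ≤ f x + f y

variable {N : ℕ} {x y : ι → ℤ}

lemma InBox.sup (hx : InBox N x) (hy : InBox N y) : InBox N (x ⊔ y) := fun i =>
  ⟨le_sup_of_le_left (hx i).1, sup_le (hx i).2 (hy i).2⟩

lemma InBox.inf (hx : InBox N x) (hy : InBox N y) : InBox N (x ⊓ y) := fun i =>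
  ⟨le_inf (hx i).1 (hy i).1, inf_le_of_left_le (hx i).2⟩

lemma TranslationSubmodular.sup_add_inf_le {f : (ι → ℤ) → ℝ} (hf : TranslationSubmodular N f)
    (hx : InBox N x) (hy : InBox N y) : f (x ⊔ y) + f (x ⊓ y) ≤ f x + f y := by
  have hmax : (fun i => max (x i - ((0 : ℕ) : ℤ)) (y i)) = x ⊔ y := by ext; simp
  have hmin : (fun i => min (x i) (y i + ((0 : ℕ) : ℤ))) = x ⊓ y := by ext; simp
  have := hf x y hx hy 0 (hmax ▸ hx.sup hy) (hmin ▸ hx.inf hy)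
  rwa [hmax, hmin] at this

end Box

section UnitBall

variable {ι : Type*} [Fintype ι] [DecidableEq ι] {x y : ι → ℤ}

lemma sup_eq_add_indicator_of_abs_sub_le_one (h : ∀ i, |y i - x i| ≤ 1) :
    x ⊔ y = fun i => x i + if i ∈ univ.filter (fun j => x j < y j) then 1 else 0 := by
  ext i
  have := abs_le.mp (h i)
  simp only [Pi.sup_apply, mem_filter, mem_univ, true_and]
  split_ifs <;> omega

lemma inf_eq_sub_indicator_of_abs_sub_le_one (h : ∀ i, |y i - x i| ≤ 1) :
    x ⊓ y = fun i => x i - if i ∈ univ.filter (fun j => y j < x j) then 1 else 0 := by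
  ext i
  have := abs_le.mp (h i)
  simp only [Pi.inf_apply, mem_filter, mem_univ, true_and]
  split_ifs <;> omega

end UnitBall

theorem neighborhood_lower_bound_general
    (d N : ℕ) (f : (Fin d → ℤ) → ℝ)
    (htsub : ∀ x y : Fin d → ℤ,
      (∀ i, 1 ≤ x i ∧ x i ≤ (N : ℤ)) → (∀ i, 1 ≤ y i ∧ y i ≤ (N : ℤ)) →
      ∀ α : ℕ,
        (∀ i, 1 ≤ max (x i - (α : ℤ)) (y i) ∧ max (x i - (α : ℤ)) (y i) ≤ (N : ℤ)) →
        (∀ i, 1 ≤ min (x i) (y i + (α : ℤ)) ∧ min (x i) (y i + (α : ℤ)) ≤ (N : ℤ)) →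
        f (fun i => max (x i - (α : ℤ)) (y i)) + f (fun i => min (x i) (y i + (α : ℤ)))
          ≤ f x + f y)
    (x : Fin d → ℤ) (hx : ∀ i, 1 ≤ x i ∧ x i ≤ (N : ℤ))
    (a b : ℝ)
    (hup : ∀ S : Finset (Fin d),
      (∀ i, 1 ≤ x i + (if i ∈ S then 1 else 0) ∧ x i + (if i ∈ S then 1 else 0) ≤ (N : ℤ)) →
      -(b / (1 - a)) ≤ f (fun i => x i + (if i ∈ S then 1 else 0)) - f x)
    (hdown : ∀ S : Finset (Fin d),
      (∀ i, 1 ≤ x i - (if i ∈ S then 1 else 0) ∧ x i - (if i ∈ S then 1 else 0) ≤ (N : ℤ)) →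
      -(b / (1 - a)) ≤ f (fun i => x i - (if i ∈ S then 1 else 0)) - f x) :
    ∀ y : Fin d → ℤ, (∀ i, 1 ≤ y i ∧ y i ≤ (N : ℤ)) → (∀ i, |y i - x i| ≤ 1) →
      f x - 2 * b / (1 - a) ≤ f y := by
  intro y hy hnear
  have hsub : f (x ⊔ y) + f (x ⊓ y) ≤ f x + f y :=
    TranslationSubmodular.sup_add_inf_le htsub hx hy
  have hsup := sup_eq_add_indicator_of_abs_sub_le_one hnear
  have hinf := inf_eq_sub_indicator_of_abs_sub_le_one hnear
  have hgain_up := hup _ (hsup ▸ InBox.sup hx hy)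
  have hgain_down := hdown _ (hinf ▸ InBox.inf hx hy)
  rw [← hsup] at hgain_up
  rw [← hinf] at hgain_down
  linarith [show 2 * b / (1 - a) = b / (1 - a) + b / (1 - a) by ring]

/-- Let `f` on `{1,...,N}^d` satisfy translation submodularity. If at `x`
every feasible move of the form `x + e_S` or `x − e_S` (indicator step over a set `S` of
coordinates) decreases `f` by at most `b/(1−a)`, then every feasible `y` with
`‖y − x‖_∞ ≤ 1` satisfies `f(y) ≥ f(x) − 2b/(1−a)`. -/
theorem neighborhood_lower_bound
    (d N : ℕ) (f : (Fin d → ℤ) → ℝ)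
    (htsub : ∀ x y : Fin d → ℤ,
      (∀ i, 1 ≤ x i ∧ x i ≤ (N : ℤ)) → (∀ i, 1 ≤ y i ∧ y i ≤ (N : ℤ)) →
      ∀ α : ℕ,
        (∀ i, 1 ≤ max (x i - (α : ℤ)) (y i) ∧ max (x i - (α : ℤ)) (y i) ≤ (N : ℤ)) →
        (∀ i, 1 ≤ min (x i) (y i + (α : ℤ)) ∧ min (x i) (y i + (α : ℤ)) ≤ (N : ℤ)) →
        f (fun i => max (x i - (α : ℤ)) (y i)) + f (fun i => min (x i) (y i + (α : ℤ)))
          ≤ f x + f y)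
    (x : Fin d → ℤ) (hx : ∀ i, 1 ≤ x i ∧ x i ≤ (N : ℤ))
    (a b : ℝ) (ha0 : 0 ≤ a) (ha1 : a < 1) (hb : 0 ≤ b)
    (hup : ∀ S : Finset (Fin d),
      (∀ i, 1 ≤ x i + (if i ∈ S then 1 else 0) ∧ x i + (if i ∈ S then 1 else 0) ≤ (N : ℤ)) →
      -(b / (1 - a)) ≤ f (fun i => x i + (if i ∈ S then 1 else 0)) - f x)
    (hdown : ∀ S : Finset (Fin d),
      (∀ i, 1 ≤ x i - (if i ∈ S then 1 else 0) ∧ x i - (if i ∈ S then 1 else 0) ≤ (N : ℤ)) →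
      -(b / (1 - a)) ≤ f (fun i => x i - (if i ∈ S then 1 else 0)) - f x) :
    ∀ y : Fin d → ℤ, (∀ i, 1 ≤ y i ∧ y i ≤ (N : ℤ)) → (∀ i, |y i - x i| ≤ 1) →
      f x - 2 * b / (1 - a) ≤ f y :=
  neighborhood_lower_bound_general d N f htsub x hx a b hup hdown
end

section
/- Let f̃ : [1,N]^d → ℝ be the convex extension of an L♮-convex function f on {1,...,N}^d, and suppose f has a unique minimizer x* with f(x) − f(x*) ≥ c for all lattice points x ≠ x* (indifference zone parameter c > 0). If f̃(x̄) − f(x*) ≤ ε for some x̄ ∈ [1,N]^d with ε < c·N, then ‖x̄ − x*‖_∞ ≤ ε/c. In particular, running with target accuracy ε_e = c·N·2^{−e−2} guarantees x* lies in the ℓ∞-ball of radius 2^{−e−2}N around the epoch-e iterate. -/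
/-!
Discrete midpoint convexity `f ⌈(x+y)/2⌉ + f ⌊(x+y)/2⌋ ≤ f x + f y`, applied with `y = x*`, splits
the coordinate offset `|z i - x* i|` between the two rounded midpoints, so induction on that
offset upgrades the indifference zone `c ≤ f z - f x*` to linear growth
`c ‖z - x*‖_∞ ≤ f z - f x*` on lattice points. The point `x̄` lies in a unit cube, where `f̃ x̄`
is a convex combination of values of `f` at lattice points whose combination is `x̄`; convexity of the
distance to `x*` then transfers the growth bound to `x̄`.
-/

open Finset

theorem Int.exists_unit_cell_of_mem_Icc {a b : ℤ} (hab : a < b) {t : ℝ}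
    (ht : (a : ℝ) ≤ t ∧ t ≤ b) :
    ∃ z : ℤ, (a ≤ z ∧ z + 1 ≤ b) ∧ ((z : ℝ) ≤ t ∧ t ≤ z + 1) := by
  refine ⟨min ⌊t⌋ (b - 1), ⟨?_, by omega⟩, ?_, ?_⟩
  · exact le_min (Int.le_floor.mpr ht.1) (by omega)
  · exact (Int.cast_le.mpr (min_le_left _ _)).trans (Int.floor_le t)
  · rcases min_cases ⌊t⌋ (b - 1) with ⟨h, -⟩ | ⟨h, -⟩ <;> rw [h]
    · exact (Int.lt_floor_add_one t).le
    · push_cast; linarith [ht.2]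

theorem mul_dist_sum_smul_le {α E : Type*} [SeminormedAddCommGroup E] [NormedSpace ℝ E]
    {s : Finset α} {w y : α → ℝ} {v : α → E} {p : E} {c y₀ : ℝ} (hc : 0 ≤ c)
    (hw₀ : ∀ j ∈ s, 0 ≤ w j) (hw₁ : ∑ j ∈ s, w j = 1)
    (h : ∀ j ∈ s, c * dist (v j) p ≤ y j - y₀) :
    c * dist (∑ j ∈ s, w j • v j) p ≤ ∑ j ∈ s, w j * y j - y₀ :=
  calc c * dist (∑ j ∈ s, w j • v j) p
      ≤ c * ∑ j ∈ s, w j * dist (v j) p :=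
        mul_le_mul_of_nonneg_left
          ((convexOn_dist p convex_univ).map_sum_le hw₀ hw₁ fun _ _ ↦ Set.mem_univ _) hc
    _ = ∑ j ∈ s, w j * (c * dist (v j) p) := by rw [mul_sum]; congr 1 with j; ring
    _ ≤ ∑ j ∈ s, w j * (y j - y₀) :=
        sum_le_sum fun j hj ↦ mul_le_mul_of_nonneg_left (h j hj) (hw₀ j hj)
    _ = ∑ j ∈ s, w j * y j - y₀ := by simp only [mul_sub, sum_sub_distrib, ← sum_mul, hw₁, one_mul]

section MidpointConvex

variable {ι : Type*} {a b : ℤ} {f : (ι → ℤ) → ℝ} {xs : ι → ℤ} {c : ℝ}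

theorem mul_abs_sub_le_sub_of_midpointConvex
    (hmid : ∀ x y : ι → ℤ, (∀ i, a ≤ x i ∧ x i ≤ b) → (∀ i, a ≤ y i ∧ y i ≤ b) →
      f (fun i => (x i + y i + 1) / 2) + f (fun i => (x i + y i) / 2) ≤ f x + f y)
    (hxs : ∀ i, a ≤ xs i ∧ xs i ≤ b) (hc : 0 ≤ c)
    (hIZ : ∀ z : ι → ℤ, (∀ i, a ≤ z i ∧ z i ≤ b) → z ≠ xs → c ≤ f z - f xs)
    (z : ι → ℤ) (hz : ∀ i, a ≤ z i ∧ z i ≤ b) (i : ι) :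
    c * |(z i : ℝ) - xs i| ≤ f z - f xs := by
  induction hn : (z i - xs i).natAbs using Nat.strong_induction_on generalizing z with
  | _ n ih =>
  rcases le_or_gt n 1 with hn₁ | hn₂
  · by_cases hzxs : z = xs
    · subst hzxs; simp
    · have habs : |(z i : ℝ) - xs i| ≤ 1 := by
        rw [← Int.cast_sub, ← Int.cast_abs, ← Int.cast_one, Int.cast_le]
        simp only [abs_eq_max_neg]; omega
      nlinarith [hIZ z hz hzxs]
  · have hup := ih _ (by omega) (fun j => (z j + xs j + 1) / 2)
      (fun j => by have := hz j; have := hxs j; omega) rfl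
    have hdown := ih _ (by omega) (fun j => (z j + xs j) / 2)
      (fun j => by have := hz j; have := hxs j; omega) rfl
    have hsplit : |(z i : ℝ) - xs i|
        = |(((z i + xs i + 1) / 2 : ℤ) : ℝ) - xs i| + |(((z i + xs i) / 2 : ℤ) : ℝ) - xs i| := by
      simp only [← Int.cast_sub, ← Int.cast_abs, ← Int.cast_add, Int.cast_inj]
      simp only [abs_eq_max_neg]; omega
    rw [hsplit, mul_add]
    linarith [hmid z xs hz hxs]

theorem mul_dist_le_sub_of_midpointConvex [Fintype ι]
    (hmid : ∀ x y : ι → ℤ, (∀ i, a ≤ x i ∧ x i ≤ b) → (∀ i, a ≤ y i ∧ y i ≤ b) →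
      f (fun i => (x i + y i + 1) / 2) + f (fun i => (x i + y i) / 2) ≤ f x + f y)
    (hxs : ∀ i, a ≤ xs i ∧ xs i ≤ b) (hc : 0 < c)
    (hIZ : ∀ z : ι → ℤ, (∀ i, a ≤ z i ∧ z i ≤ b) → z ≠ xs → c ≤ f z - f xs)
    (z : ι → ℤ) (hz : ∀ i, a ≤ z i ∧ z i ≤ b) :
    c * dist (fun i => (z i : ℝ)) (fun i => (xs i : ℝ)) ≤ f z - f xs := by
  have hcoord := mul_abs_sub_le_sub_of_midpointConvex hmid hxs hc.le hIZ z hz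
  have hnonneg : 0 ≤ (f z - f xs) / c := by
    by_cases hzxs : z = xs
    · simp [hzxs]
    · exact div_nonneg (hc.le.trans (hIZ z hz hzxs)) hc.le
  rw [← le_div_iff₀' hc, dist_eq_norm, pi_norm_le_iff_of_nonneg hnonneg]
  intro i
  rw [le_div_iff₀' hc, Pi.sub_apply, Real.norm_eq_abs]
  exact hcoord i

end MidpointConvex

theorem iz_localization_general
    (d N : ℕ) (hN : 2 ≤ N)
    (f : (Fin d → ℤ) → ℝ) (ftil : (Fin d → ℝ) → ℝ)
    (hmid : ∀ x y : Fin d → ℤ,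
      (∀ i, 1 ≤ x i ∧ x i ≤ (N : ℤ)) → (∀ i, 1 ≤ y i ∧ y i ≤ (N : ℤ)) →
      f (fun i => (x i + y i + 1) / 2) + f (fun i => (x i + y i) / 2) ≤ f x + f y)
    (hpiece : ∀ x : Fin d → ℝ, (∀ i, 1 ≤ x i ∧ x i ≤ (N : ℝ)) →
      ∀ z : Fin d → ℤ, (∀ i, 1 ≤ z i ∧ z i + 1 ≤ (N : ℤ)) →
        (∀ i, (z i : ℝ) ≤ x i ∧ x i ≤ (z i : ℝ) + 1) →
        ∃ (lam : Fin (d + 1) → ℝ) (S : Fin (d + 1) → Fin d → ℤ),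
          (∀ j, 0 ≤ lam j) ∧ (∑ j, lam j = 1) ∧
          (∀ j i, S j i = z i ∨ S j i = z i + 1) ∧
          (∀ i, x i = ∑ j, lam j * ((S j i : ℤ) : ℝ)) ∧
          ftil x = ∑ j, lam j * f (S j))
    (xs : Fin d → ℤ) (hxs : ∀ i, 1 ≤ xs i ∧ xs i ≤ (N : ℤ))
    (c : ℝ) (hc : 0 < c)
    (hIZ : ∀ z : Fin d → ℤ, (∀ i, 1 ≤ z i ∧ z i ≤ (N : ℤ)) → z ≠ xs → c ≤ f z - f xs)
    (ε : ℝ)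
    (xbar : Fin d → ℝ) (hxbar : ∀ i, 1 ≤ xbar i ∧ xbar i ≤ (N : ℝ))
    (hval : ftil xbar - f xs ≤ ε) :
    ‖xbar - (fun i => ((xs i : ℤ) : ℝ))‖ ≤ ε / c := by
  choose z hz hzx using fun i ↦
    Int.exists_unit_cell_of_mem_Icc (a := 1) (b := N) (t := xbar i) (by omega)
      (by exact_mod_cast hxbar i)
  obtain ⟨lam, S, hlam₀, hlam₁, hS, hx, hftil⟩ := hpiece xbar hxbar z hz hzx
  have hSbox : ∀ j i, 1 ≤ S j i ∧ S j i ≤ (N : ℤ) := fun j i ↦ by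
    have := hz i; rcases hS j i with h | h <;> omega
  have hxbar_eq : xbar = ∑ j, lam j • fun i => (S j i : ℝ) := by
    ext i; simp [hx i, Finset.sum_apply]
  rw [← dist_eq_norm, le_div_iff₀' hc]
  calc c * dist xbar (fun i => (xs i : ℝ))
      ≤ ∑ j, lam j * f (S j) - f xs := by
        rw [hxbar_eq]
        exact mul_dist_sum_smul_le hc.le (fun j _ ↦ hlam₀ j) hlam₁
          fun j _ ↦ mul_dist_le_sub_of_midpointConvex hmid hxs hc hIZ (S j) (hSbox j)
    _ ≤ ε := hftil ▸ hval

/-- Let `f̃` be the convex extension on `[1,N]^d` of an L♮-convex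
function `f` on `{1,...,N}^d` (convex, agreeing with `f` on lattice points, and equal
on every unit cube to a convex combination of the lattice values via the Lovász
structure). If `f` has unique minimizer `x*` with indifference zone `c > 0`, and
`f̃(x̄) − f(x*) ≤ ε` with `ε < c·N`, then `‖x̄ − x*‖_∞ ≤ ε/c`. -/
theorem iz_localization
    (d N : ℕ) (hd : 1 ≤ d) (hN : 2 ≤ N)
    (f : (Fin d → ℤ) → ℝ) (ftil : (Fin d → ℝ) → ℝ)
    (hmid : ∀ x y : Fin d → ℤ,
      (∀ i, 1 ≤ x i ∧ x i ≤ (N : ℤ)) → (∀ i, 1 ≤ y i ∧ y i ≤ (N : ℤ)) →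
      f (fun i => (x i + y i + 1) / 2) + f (fun i => (x i + y i) / 2) ≤ f x + f y)
    (hconv : ConvexOn ℝ {x : Fin d → ℝ | ∀ i, 1 ≤ x i ∧ x i ≤ (N : ℝ)} ftil)
    (hagree : ∀ z : Fin d → ℤ, (∀ i, 1 ≤ z i ∧ z i ≤ (N : ℤ)) →
      ftil (fun i => (z i : ℝ)) = f z)
    (hpiece : ∀ x : Fin d → ℝ, (∀ i, 1 ≤ x i ∧ x i ≤ (N : ℝ)) →
      ∀ z : Fin d → ℤ, (∀ i, 1 ≤ z i ∧ z i + 1 ≤ (N : ℤ)) →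
        (∀ i, (z i : ℝ) ≤ x i ∧ x i ≤ (z i : ℝ) + 1) →
        ∃ (lam : Fin (d + 1) → ℝ) (S : Fin (d + 1) → Fin d → ℤ),
          (∀ j, 0 ≤ lam j) ∧ (∑ j, lam j = 1) ∧
          (∀ j i, S j i = z i ∨ S j i = z i + 1) ∧
          (∀ i, x i = ∑ j, lam j * ((S j i : ℤ) : ℝ)) ∧
          ftil x = ∑ j, lam j * f (S j))
    (xs : Fin d → ℤ) (hxs : ∀ i, 1 ≤ xs i ∧ xs i ≤ (N : ℤ))
    (c : ℝ) (hc : 0 < c)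
    (hIZ : ∀ z : Fin d → ℤ, (∀ i, 1 ≤ z i ∧ z i ≤ (N : ℤ)) → z ≠ xs → c ≤ f z - f xs)
    (ε : ℝ) (hε : 0 ≤ ε) (hεN : ε < c * N)
    (xbar : Fin d → ℝ) (hxbar : ∀ i, 1 ≤ xbar i ∧ xbar i ≤ (N : ℝ))
    (hval : ftil xbar - f xs ≤ ε) :
    ‖xbar - (fun i => ((xs i : ℤ) : ℝ))‖ ≤ ε / c :=
  iz_localization_general d N hN f ftil hmid hpiece xs hxs c hc hIZ ε xbar hxbar hval
end

section
/- Let f̃ : [1,N]^d → ℝ be convex, agreeing on lattice points with a function f : {1,...,N}^d → ℝ that has unique minimizer x* and indifference zone c > 0 (i.e., f(x) − f(x*) ≥ c for all lattice x ≠ x*). Suppose for every x ∈ [1,N]^d with ‖x − x*‖_∞ ≤ 1, f̃(x) is a convex combination Σ_{i=0}^d λ_i f(S^i) of values of f at lattice points S^0,...,S^d all lying in a common unit cube containing x and x*, with x = Σ_i λ_i S^i. Then for all such x, ‖x − x*‖_∞ ≤ c^{-1}·(f̃(x) − f(x*)). -/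
/-! If `x = Σ λ_j S^j` and `T` is the set of vertices `S^j ≠ x*`, then every vertex of `T`
costs at least `c` above `f(x*)`, so `f̃(x) − f(x*) ≥ c · Σ_{j ∈ T} λ_j`; and since all
vertices lie in one unit cube with `x*`, the vertices off `T` contribute nothing to
`x − x*` and the others at most `λ_j`, so `‖x − x*‖_∞ ≤ Σ_{j ∈ T} λ_j`. -/

open Finset

section ConvexCombination

variable {ι : Type*} [Fintype ι] {lam : ι → ℝ} (T : Finset ι)

theorem norm_sum_smul_sub_le_sum_weight {E : Type*} [NormedAddCommGroup E] [NormedSpace ℝ E]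
    (P : ι → E) (p : E) (hlam0 : ∀ j, 0 ≤ lam j) (hlam1 : ∑ j, lam j = 1)
    (hT : ∀ j ∈ T, ‖P j - p‖ ≤ 1) (hTc : ∀ j ∉ T, P j = p) :
    ‖∑ j, lam j • P j - p‖ ≤ ∑ j ∈ T, lam j := by
  have hrep : ∑ j, lam j • P j - p = ∑ j, lam j • (P j - p) := by
    simp only [smul_sub, sum_sub_distrib, ← sum_smul, hlam1, one_smul]
  calc ‖∑ j, lam j • P j - p‖
      ≤ ∑ j, lam j * ‖P j - p‖ := by
        rw [hrep]
        refine (norm_sum_le _ _).trans_eq (sum_congr rfl fun j _ => ?_)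
        rw [norm_smul, Real.norm_of_nonneg (hlam0 j)]
    _ = ∑ j ∈ T, lam j * ‖P j - p‖ :=
        (sum_subset (subset_univ T) fun j _ hj => by simp [hTc j hj]).symm
    _ ≤ ∑ j ∈ T, lam j :=
        sum_le_sum fun j hj => mul_le_of_le_one_right (hlam0 j) (hT j hj)

theorem mul_sum_weight_le_sum_mul_sub (v : ι → ℝ) (v₀ c : ℝ) (hlam0 : ∀ j, 0 ≤ lam j)
    (hlam1 : ∑ j, lam j = 1) (hT : ∀ j ∈ T, c ≤ v j - v₀) (hTc : ∀ j ∉ T, v₀ ≤ v j) :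
    c * ∑ j ∈ T, lam j ≤ ∑ j, lam j * v j - v₀ := by
  have hrep : ∑ j, lam j * v j - v₀ = ∑ j, lam j * (v j - v₀) := by
    simp only [mul_sub, sum_sub_distrib, ← sum_mul, hlam1, one_mul]
  calc c * ∑ j ∈ T, lam j
      = ∑ j ∈ T, lam j * c := by rw [mul_sum]; simp only [mul_comm]
    _ ≤ ∑ j ∈ T, lam j * (v j - v₀) :=
        sum_le_sum fun j hj => mul_le_mul_of_nonneg_left (hT j hj) (hlam0 j)
    _ ≤ ∑ j, lam j * (v j - v₀) :=
        sum_le_sum_of_subset_of_nonneg (subset_univ T) fun j _ hj =>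
          mul_nonneg (hlam0 j) (sub_nonneg.mpr (hTc j hj))
    _ = ∑ j, lam j * v j - v₀ := hrep.symm

end ConvexCombination

theorem norm_intCast_sub_le_one_of_unitCube {ι : Type*} [Fintype ι] {z a b : ι → ℤ}
    (ha : ∀ i, a i = z i ∨ a i = z i + 1) (hb : ∀ i, b i = z i ∨ b i = z i + 1) :
    ‖(fun i => (a i : ℝ)) - fun i => (b i : ℝ)‖ ≤ 1 := by
  refine (pi_norm_le_iff_of_nonneg zero_le_one).mpr fun i => ?_
  have hab : |a i - b i| ≤ 1 := by
    rw [abs_le]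
    rcases ha i with h | h <;> rcases hb i with h' | h' <;> omega
  simpa [Real.norm_eq_abs, ← Int.cast_sub, ← Int.cast_abs] using (Int.cast_le (R := ℝ)).mpr hab

theorem wsm_local_step_general
    (d N : ℕ) (f : (Fin d → ℤ) → ℝ) (ftil : (Fin d → ℝ) → ℝ)
    (xs : Fin d → ℤ)
    (c : ℝ) (hc : 0 < c)
    (hIZ : ∀ z : Fin d → ℤ, (∀ i, 1 ≤ z i ∧ z i ≤ (N : ℤ)) → z ≠ xs → c ≤ f z - f xs)
    (hdecomp : ∀ x : Fin d → ℝ, (∀ i, 1 ≤ x i ∧ x i ≤ (N : ℝ)) →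
      ‖x - (fun i => ((xs i : ℤ) : ℝ))‖ ≤ 1 →
      ∃ (lam : Fin (d + 1) → ℝ) (S : Fin (d + 1) → Fin d → ℤ),
        (∀ j, 0 ≤ lam j) ∧ (∑ j, lam j = 1) ∧
        (∀ j i, 1 ≤ S j i ∧ S j i ≤ (N : ℤ)) ∧
        (∃ z : Fin d → ℤ,
          (∀ j i, S j i = z i ∨ S j i = z i + 1) ∧ (∀ i, xs i = z i ∨ xs i = z i + 1)) ∧
        (∀ i, x i = ∑ j, lam j * ((S j i : ℤ) : ℝ)) ∧
        ftil x = ∑ j, lam j * f (S j)) :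
    ∀ x : Fin d → ℝ, (∀ i, 1 ≤ x i ∧ x i ≤ (N : ℝ)) →
      ‖x - (fun i => ((xs i : ℤ) : ℝ))‖ ≤ 1 →
      ‖x - (fun i => ((xs i : ℤ) : ℝ))‖ ≤ c⁻¹ * (ftil x - f xs) := by
  intro x hx hnear
  obtain ⟨lam, S, hlam0, hlam1, hSbox, ⟨z, hSz, hxsz⟩, hxrep, hfrep⟩ := hdecomp x hx hnear
  set T := univ.filter fun j => S j ≠ xs
  have hx_eq : x = ∑ j, lam j • fun i => (S j i : ℝ) := by
    ext i
    simp [hxrep i]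
  have hnorm : ‖x - fun i => (xs i : ℝ)‖ ≤ ∑ j ∈ T, lam j := by
    rw [hx_eq]
    refine norm_sum_smul_sub_le_sum_weight T _ _ hlam0 hlam1
      (fun j _ => norm_intCast_sub_le_one_of_unitCube (hSz j) hxsz) fun j hj => ?_
    rw [show S j = xs by simpa [T] using hj]
  have hgap : c * ∑ j ∈ T, lam j ≤ ftil x - f xs := by
    rw [hfrep]
    refine mul_sum_weight_le_sum_mul_sub T _ _ _ hlam0 hlam1
      (fun j hj => hIZ (S j) (hSbox j) (mem_filter.mp hj).2) fun j hj => ?_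
    rw [show S j = xs by simpa [T] using hj]
  exact hnorm.trans ((le_inv_mul_iff₀ hc).mpr hgap)

/-- (Local step of the weak sharp minimum property.) Let `f̃` be convex
on `[1,N]^d`, agreeing on lattice points with `f : {1,...,N}^d → ℝ` which has unique
minimizer `x*` and indifference zone `c > 0`. Suppose every `x` in the box with
`‖x − x*‖_∞ ≤ 1` admits a convex-combination representation `x = Σ λ_j S^j`,
`f̃(x) = Σ λ_j f(S^j)`, over lattice points `S^j` lying in a common unit cube that also
contains `x*`. Then `‖x − x*‖_∞ ≤ c⁻¹ (f̃(x) − f(x*))` for all such `x`. -/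
theorem wsm_local_step
    (d N : ℕ) (f : (Fin d → ℤ) → ℝ) (ftil : (Fin d → ℝ) → ℝ)
    (hconv : ConvexOn ℝ {x : Fin d → ℝ | ∀ i, 1 ≤ x i ∧ x i ≤ (N : ℝ)} ftil)
    (hagree : ∀ z : Fin d → ℤ, (∀ i, 1 ≤ z i ∧ z i ≤ (N : ℤ)) →
      ftil (fun i => (z i : ℝ)) = f z)
    (xs : Fin d → ℤ) (hxs : ∀ i, 1 ≤ xs i ∧ xs i ≤ (N : ℤ))
    (c : ℝ) (hc : 0 < c)
    (hIZ : ∀ z : Fin d → ℤ, (∀ i, 1 ≤ z i ∧ z i ≤ (N : ℤ)) → z ≠ xs → c ≤ f z - f xs)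
    (hdecomp : ∀ x : Fin d → ℝ, (∀ i, 1 ≤ x i ∧ x i ≤ (N : ℝ)) →
      ‖x - (fun i => ((xs i : ℤ) : ℝ))‖ ≤ 1 →
      ∃ (lam : Fin (d + 1) → ℝ) (S : Fin (d + 1) → Fin d → ℤ),
        (∀ j, 0 ≤ lam j) ∧ (∑ j, lam j = 1) ∧
        (∀ j i, 1 ≤ S j i ∧ S j i ≤ (N : ℤ)) ∧
        (∃ z : Fin d → ℤ,
          (∀ j i, S j i = z i ∨ S j i = z i + 1) ∧ (∀ i, xs i = z i ∨ xs i = z i + 1)) ∧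
        (∀ i, x i = ∑ j, lam j * ((S j i : ℤ) : ℝ)) ∧
        ftil x = ∑ j, lam j * f (S j)) :
    ∀ x : Fin d → ℝ, (∀ i, 1 ≤ x i ∧ x i ≤ (N : ℝ)) →
      ‖x - (fun i => ((xs i : ℤ) : ℝ))‖ ≤ 1 →
      ‖x - (fun i => ((xs i : ℤ) : ℝ))‖ ≤ c⁻¹ * (ftil x - f xs) :=
  wsm_local_step_general d N f ftil xs c hc hIZ hdecomp
end
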